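/- The map f_AM restricts to a bijection from self-modified ascent sequences of length n onto Fishburn matrices with entry sum n all of whose diagonal entries are positive. -/

import Mathlib

/-!
Along a self-modified sequence only the moves AM1 and AM2 occur. By induction, `fAM l` stays
upper triangular with positive diagonal, has dimension `asc l + 1`, and the topmost nonzero
entry of its last column lies in the row given by the last letter of `l`; hence `mindex` is
that letter, and the next letter either does not exceed it (AM1) or equals the dimension (AM2).
Moreover reading the matrix column by column, each column from the diagonal upwards, gives
back `l`, which proves injectivity. For surjectivity, peel a matrix with positive diagonal:
if its last column is a single `1` in the corner, delete the last row and column (undoing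
AM2); otherwise decrement the topmost nonzero entry of the last column (undoing AM1). The
invariant for the smaller matrix shows that the corresponding letter may be appended.
-/

def ascents (l : List ℕ) : ℕ :=
  ((l.zip l.tail).filter (fun p => p.1 < p.2)).length

def IsAscSeq (l : List ℕ) : Prop :=
  l.getD 0 0 = 0 ∧
  ∀ k, k < l.length → 0 < k → l.getD k 0 ≤ ascents (l.take k) + 1

def IsRGF (l : List ℕ) : Prop :=
  l.getD 0 0 = 0 ∧
  ∀ k, k < l.length → ∀ j, l.getD k 0 = j + 1 → ∃ i, i < k ∧ l.getD i 0 = j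

def SelfModified (l : List ℕ) : Prop :=
  IsAscSeq l ∧
  ∀ k, k < l.length → 0 < k →
    l.getD k 0 ≤ l.getD (k - 1) 0 ∨ l.getD k 0 = ascents (l.take k) + 1

def Contains101 (l : List ℕ) : Prop :=
  ∃ i j k, i < j ∧ j < k ∧ k < l.length ∧
    l.getD i 0 = l.getD k 0 ∧ l.getD j 0 < l.getD k 0

def Contains0101 (l : List ℕ) : Prop :=
  ∃ i j k m, i < j ∧ j < k ∧ k < m ∧ m < l.length ∧
    l.getD i 0 = l.getD k 0 ∧ l.getD j 0 = l.getD m 0 ∧ l.getD i 0 < l.getD j 0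

def Contains1010 (l : List ℕ) : Prop :=
  ∃ i j k m, i < j ∧ j < k ∧ k < m ∧ m < l.length ∧
    l.getD i 0 = l.getD k 0 ∧ l.getD j 0 = l.getD m 0 ∧ l.getD j 0 < l.getD i 0

/-- The view of position `i` in the sequence `a`: the number of indices `j > i` such
that `a j` strictly exceeds all entries `a k` for `i ≤ k < j`.  This agrees with the
recursive definition `v i = v j + 1` for `j` the least index `> i` with `a j > a i`. -/
def view {α : Type*} [LinearOrder α] [Inhabited α] (a : List α) (i : ℕ) : ℕ :=
  ((List.range a.length).filter (fun j =>
    decide (i < j ∧ ∀ k, k < j → i ≤ k → a.getD k default < a.getD j default))).length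

/-- The panorama of `a`: the views of the positions of `a`, listed grouped by entry
value from largest value to smallest, positions within a group in increasing order. -/
def pan {α : Type*} [LinearOrder α] [Inhabited α] (a : List α) : List ℕ :=
  ((List.range a.length).mergeSort (fun i j =>
    decide (a.getD j default < a.getD i default ∨
      (a.getD i default = a.getD j default ∧ i ≤ j)))).map (view a)

/-- A square matrix of natural numbers, given by a dimension and an entry function
(indices are 0-based; entries with an index `≥ d` are irrelevant/zero). -/
structure FMat where
  d : ℕ
  entry : ℕ → ℕ → ℕ

/-- 0-based index of the first row whose rightmost entry is nonzero. -/
noncomputable def mindex (M : FMat) : ℕ :=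
  sInf {i | M.entry i (M.d - 1) ≠ 0}

/-- One step of the recursive bijection from ascent sequences to Fishburn matrices,
with cases AM1, AM2, AM3 (0-based indices). -/
noncomputable def fStep (M : FMat) (a : ℕ) : FMat :=
  if a ≤ mindex M then
    -- AM1: increase entry (a, d-1)
    ⟨M.d, fun i j => M.entry i j + if i = a ∧ j = M.d - 1 then 1 else 0⟩
  else if a = M.d then
    -- AM2: append a new row and column, with 1 in the new diagonal entry
    ⟨M.d + 1, fun i j =>
      if i = M.d ∨ j = M.d then (if i = M.d ∧ j = M.d then 1 else 0)
      else M.entry i j⟩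
  else
    -- AM3: insert a new row and column at index a
    ⟨M.d + 1, fun i j =>
      if i = a then (if j = M.d then 1 else 0)
      else if j = a then (if i < a then M.entry i (M.d - 1) else 0)
      else if j = M.d ∧ i < a then 0
      else M.entry (if i < a then i else i - 1) (if j < a then j else j - 1)⟩

/-- The map from ascent sequences to Fishburn matrices. -/
noncomputable def fAM (l : List ℕ) : FMat :=
  l.tail.foldl fStep ⟨1, fun i j => if i = 0 ∧ j = 0 then 1 else 0⟩

/-- Fishburn matrix: upper triangular (and supported on `[0,d) × [0,d)`),
with no zero row and no zero column. -/
def IsFishburn (M : FMat) : Prop :=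
  (∀ i j, (M.d ≤ i ∨ M.d ≤ j ∨ j < i) → M.entry i j = 0) ∧
  (∀ i, i < M.d → ∃ j, j < M.d ∧ M.entry i j ≠ 0) ∧
  (∀ j, j < M.d → ∃ i, i < M.d ∧ M.entry i j ≠ 0)

def entrySum (M : FMat) : ℕ :=
  ∑ i ∈ Finset.range M.d, ∑ j ∈ Finset.range M.d, M.entry i j

/-- Reflection of a matrix through its antidiagonal. -/
def reflect (M : FMat) : FMat :=
  ⟨M.d, fun i j => if i < M.d ∧ j < M.d then M.entry (M.d - 1 - j) (M.d - 1 - i) else 0⟩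

/-- The canonical sequence `(0^{m₀₀}, 1^{m₁₁}, 0^{m₀₁}, 2^{m₂₂}, 1^{m₁₂}, 0^{m₀₂}, …)`
(0-based indices) associated to a matrix; this is `f_MA(M)` for `M ∈ RMatrices`. -/
def canonSeq (M : FMat) : List ℕ :=
  (List.range M.d).flatMap (fun j =>
    (List.range (j + 1)).reverse.flatMap (fun i => List.replicate (M.entry i j) i))

/-- The dual canonical sequence
`(0^{m_{d-1,d-1}}, 1^{m_{d-2,d-2}}, 0^{m_{d-2,d-1}}, …, (d-1)^{m_{0,0}}, …, 0^{m_{0,d-1}})`,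
i.e. `f_MA` applied to the antidiagonal reflection of `M`. -/
def dualCanonSeq (M : FMat) : List ℕ :=
  (List.range M.d).flatMap (fun j =>
    (List.range (j + 1)).reverse.flatMap (fun i =>
      List.replicate (M.entry (M.d - 1 - j) (M.d - 1 - i)) i))

/-- A matrix is SE-free if it has no pair of nonzero entries `m i j`, `m i' j'`
with `i < i'`, `j < j'` and `i' ≤ j`. -/
def SEFree (M : FMat) : Prop :=
  ¬ ∃ i j i' j', i < i' ∧ j < j' ∧ i' ≤ j ∧ j' < M.d ∧
    M.entry i j ≠ 0 ∧ M.entry i' j' ≠ 0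

/-- Generalized ballot sequence (Yamanouchi word): in every prefix, each value `j+1`
occurs at most as often as `j`. -/
def IsBallot (l : List ℕ) : Prop :=
  ∀ k j, (l.take k).count (j + 1) ≤ (l.take k).count j

theorem ascents_cons_cons (x y : ℕ) (l : List ℕ) :
    ascents (x :: y :: l) = ascents (y :: l) + if x < y then 1 else 0 := by
  simp only [ascents, List.tail_cons, List.zip_cons_cons, List.filter_cons]
  split_ifs <;> simp_all

theorem ascents_cons_concat (x : ℕ) (t : List ℕ) (a : ℕ) :
    ascents (x :: t ++ [a]) = ascents (x :: t) + if t.getLastD x < a then 1 else 0 := by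
  induction t generalizing x with
  | nil => simp only [List.cons_append, List.nil_append, ascents_cons_cons, List.getLastD_nil]; rfl
  | cons y t ih =>
    simp only [List.cons_append, List.getLastD_cons, ascents_cons_cons] at ih ⊢
    rw [ih]
    omega

theorem ascents_concat {l : List ℕ} (hl : l ≠ []) (a : ℕ) :
    ascents (l ++ [a]) = ascents l + if l.getLastD 0 < a then 1 else 0 := by
  obtain ⟨x, t, rfl⟩ := List.exists_cons_of_ne_nil hl
  rw [ascents_cons_concat, List.getLastD_cons]

theorem IsAscSeq.getLastD_le {l : List ℕ} (h : IsAscSeq l) : l.getLastD 0 ≤ ascents l + 1 := by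
  obtain rfl | ⟨l, b, rfl⟩ := l.eq_nil_or_concat'
  · simp
  rcases eq_or_ne l [] with rfl | hl
  · exact h.1.le.trans (Nat.zero_le _)
  have hb := h.2 l.length (by simp) (List.length_pos_iff.2 hl)
  rw [List.getD_append_right _ _ _ _ le_rfl, Nat.sub_self, List.getD_cons_zero,
    List.take_left' rfl] at hb
  rw [ascents_concat hl, List.getLastD_concat]
  omega

theorem selfModified_concat_iff {l : List ℕ} (hl : l ≠ []) (a : ℕ) :
    SelfModified (l ++ [a]) ↔ SelfModified l ∧ (a ≤ l.getLastD 0 ∨ a = ascents l + 1) := by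
  have hn : 0 < l.length := List.length_pos_iff.2 hl
  have hget : ∀ k < l.length, (l ++ [a]).getD k 0 = l.getD k 0 := List.getD_append _ _ _
  have hget_pred : ∀ k < l.length, (l ++ [a]).getD (k - 1) 0 = l.getD (k - 1) 0 :=
    fun k hk => hget _ (by omega)
  have htake : ∀ k < l.length, (l ++ [a]).take k = l.take k :=
    fun k hk => List.take_append_of_le_length hk.le
  have hlast : (l ++ [a]).getD (l.length - 1) 0 = l.getLastD 0 := by
    obtain ⟨l', b, rfl⟩ := (l.eq_nil_or_concat').resolve_left hl
    simp
  have hget_len : (l ++ [a]).getD l.length 0 = a := by simp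
  simp +contextual only [SelfModified, IsAscSeq, List.length_append,
    List.length_singleton, Nat.forall_lt_succ_right, hget, hget_pred, htake, hn, hlast,
    hget_len, List.take_left' rfl, true_imp_iff]
  constructor
  · rintro ⟨⟨h0, hasc, -⟩, hsm, ha⟩
    exact ⟨⟨⟨h0, hasc⟩, hsm⟩, ha⟩
  · rintro ⟨⟨hasc, hsm⟩, ha⟩
    have hbound := IsAscSeq.getLastD_le hasc
    exact ⟨⟨hasc.1, hasc.2, by omega⟩, hsm, ha⟩

theorem selfModified_singleton_zero : SelfModified [0] :=
  ⟨⟨rfl, fun _ hk hk0 => by rw [List.length_singleton] at hk; omega⟩,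
    fun _ hk hk0 => by rw [List.length_singleton] at hk; omega⟩

namespace FMat

theorem ext {M N : FMat} (hd : M.d = N.d) (he : ∀ i j, M.entry i j = N.entry i j) : M = N := by
  cases M; cases N; cases hd; congr; funext i j; exact he i j

def IsUpper (M : FMat) : Prop :=
  ∀ i j, (M.d ≤ i ∨ M.d ≤ j ∨ j < i) → M.entry i j = 0

def HasPosDiag (M : FMat) : Prop :=
  ∀ i, i < M.d → 0 < M.entry i i

def incLastCol (M : FMat) (a : ℕ) : FMat :=
  ⟨M.d, fun i j => M.entry i j + if i = a ∧ j = M.d - 1 then 1 else 0⟩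

def decLastCol (M : FMat) (a : ℕ) : FMat :=
  ⟨M.d, fun i j => M.entry i j - if i = a ∧ j = M.d - 1 then 1 else 0⟩

def grow (M : FMat) : FMat :=
  ⟨M.d + 1, fun i j =>
    if i = M.d ∨ j = M.d then (if i = M.d ∧ j = M.d then 1 else 0) else M.entry i j⟩

def shrink (M : FMat) : FMat :=
  ⟨M.d - 1, fun i j => if i < M.d - 1 ∧ j < M.d - 1 then M.entry i j else 0⟩

variable {M : FMat} {a i : ℕ}

theorem IsUpper.lt_d_of_entry_ne_zero (hM : M.IsUpper) {j : ℕ} (h : M.entry i j ≠ 0) :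
    i < M.d :=
  not_le.1 fun hi => h (hM i j (Or.inl hi))

theorem IsUpper.isFishburn (hM : M.IsUpper) (hD : M.HasPosDiag) : IsFishburn M :=
  ⟨hM, fun i hi => ⟨i, hi, (hD i hi).ne'⟩, fun j hj => ⟨j, hj, (hD j hj).ne'⟩⟩

theorem IsUpper.incLastCol (hM : M.IsUpper) (ha : a < M.d) : (M.incLastCol a).IsUpper := by
  intro i j hij
  simp only [FMat.incLastCol] at hij ⊢
  rw [hM i j hij, if_neg (by omega)]

theorem IsUpper.decLastCol (hM : M.IsUpper) : (M.decLastCol a).IsUpper := by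
  intro i j hij
  simp only [FMat.decLastCol] at hij ⊢
  rw [hM i j hij, Nat.zero_sub]

theorem IsUpper.grow (hM : M.IsUpper) : M.grow.IsUpper := by
  intro i j hij
  simp only [FMat.grow] at hij ⊢
  split_ifs
  · omega
  · rfl
  · exact hM i j (by omega)

theorem IsUpper.shrink (hM : M.IsUpper) : M.shrink.IsUpper := by
  intro i j hij
  simp only [FMat.shrink] at hij ⊢
  split_ifs with h
  · exact hM i j (by omega)
  · rfl

theorem HasPosDiag.incLastCol (hD : M.HasPosDiag) : (M.incLastCol a).HasPosDiag :=
  fun i hi => (hD i hi).trans_le (Nat.le_add_right _ _)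

theorem HasPosDiag.decLastCol (hD : M.HasPosDiag) (ha : a = M.d - 1 → M.entry a a ≠ 1) :
    (M.decLastCol a).HasPosDiag := by
  intro i hi
  simp only [FMat.decLastCol] at hi ⊢
  have := hD i hi
  split_ifs with h
  · obtain ⟨rfl, h⟩ := h
    have := ha h
    omega
  · omega

theorem HasPosDiag.grow (hD : M.HasPosDiag) : M.grow.HasPosDiag := by
  intro i hi
  simp only [FMat.grow] at hi ⊢
  split_ifs
  · exact Nat.one_pos
  · omega
  · exact hD i (by omega)

theorem HasPosDiag.shrink (hD : M.HasPosDiag) : M.shrink.HasPosDiag := by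
  intro i hi
  simp only [FMat.shrink] at hi ⊢
  rw [if_pos ⟨hi, hi⟩]
  exact hD i (by omega)

theorem incLastCol_decLastCol (h : M.entry a (M.d - 1) ≠ 0) :
    (M.decLastCol a).incLastCol a = M := by
  refine FMat.ext rfl fun i j => ?_
  simp only [FMat.incLastCol, FMat.decLastCol]
  by_cases hij : i = a ∧ j = M.d - 1
  · obtain ⟨rfl, rfl⟩ := hij
    simp only [and_self, if_true]
    omega
  · simp only [hij, if_false, Nat.sub_zero, Nat.add_zero]

theorem grow_shrink (hM : M.IsUpper) (hd : 0 < M.d)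
    (hcol : ∀ i < M.d - 1, M.entry i (M.d - 1) = 0) (hcorner : M.entry (M.d - 1) (M.d - 1) = 1) :
    M.shrink.grow = M := by
  refine FMat.ext (by simp only [FMat.grow, FMat.shrink]; omega) fun i j => ?_
  rw [FMat.grow, show M.shrink.d = M.d - 1 from rfl]
  dsimp only [FMat.shrink]
  by_cases hij : i = M.d - 1 ∨ j = M.d - 1
  · rw [if_pos hij]
    split_ifs with hcorner'
    · rw [hcorner'.1, hcorner'.2, hcorner]
    · by_cases hi : i < M.d - 1
      · obtain rfl : j = M.d - 1 := by omega
        exact (hcol i hi).symm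
      · exact (hM i j (by omega)).symm
  · rw [if_neg hij]
    split_ifs
    · rfl
    · exact (hM i j (by omega)).symm

end FMat

section mindex

variable {M : FMat} {a i : ℕ}

theorem mindex_le (h : M.entry i (M.d - 1) ≠ 0) : mindex M ≤ i :=
  Nat.sInf_le h

theorem entry_mindex_ne_zero (h : M.entry i (M.d - 1) ≠ 0) : M.entry (mindex M) (M.d - 1) ≠ 0 :=
  Nat.sInf_mem (s := {i | M.entry i (M.d - 1) ≠ 0}) ⟨i, h⟩

theorem entry_eq_zero_of_lt_mindex (h : i < mindex M) : M.entry i (M.d - 1) = 0 :=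
  not_not.1 (Nat.notMem_of_lt_sInf h)

theorem mindex_eq_of_ne_zero_of_forall_lt (ha : M.entry a (M.d - 1) ≠ 0)
    (hz : ∀ i < a, M.entry i (M.d - 1) = 0) : mindex M = a :=
  (mindex_le ha).antisymm (not_lt.1 fun h => entry_mindex_ne_zero ha (hz _ h))

theorem fStep_of_le_mindex (h : a ≤ mindex M) : fStep M a = M.incLastCol a :=
  if_pos h

theorem fStep_d_of_mindex_lt (h : mindex M < M.d) : fStep M M.d = M.grow := by
  rw [fStep, if_neg (not_le.2 h), if_pos rfl]; rfl

end mindex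

theorem fAM_concat {l : List ℕ} (hl : l ≠ []) (a : ℕ) : fAM (l ++ [a]) = fStep (fAM l) a := by
  obtain ⟨x, l, rfl⟩ := List.exists_cons_of_ne_nil hl
  simp [fAM, List.foldl_append]

section entrySum

variable {M : FMat} {a : ℕ}

theorem entrySum_incLastCol (ha : a < M.d) : entrySum (M.incLastCol a) = entrySum M + 1 := by
  have hd : M.d - 1 < M.d := by omega
  simp [entrySum, FMat.incLastCol, Finset.sum_add_distrib, ite_and, ha, hd]

theorem entrySum_grow : entrySum M.grow = entrySum M + 1 := by
  simp only [entrySum, FMat.grow, Finset.sum_range_succ]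
  simp +contextual only [or_true, ↓reduceIte, and_true, true_or, true_and,
    or_self, and_self, Finset.sum_add_distrib, Finset.sum_ite_eq', Finset.mem_range,
    lt_self_iff_false, add_zero, zero_add, Nat.add_right_cancel_iff]
  refine Finset.sum_congr rfl fun i hi => Finset.sum_congr rfl fun j hj => ?_
  rw [if_neg (by simp only [Finset.mem_range] at hi hj; omega)]

theorem d_pos_of_entrySum_ne_zero (h : entrySum M ≠ 0) : 0 < M.d :=
  Nat.pos_of_ne_zero fun hd => h (by simp [entrySum, hd])

theorem d_le_entrySum (hD : M.HasPosDiag) : M.d ≤ entrySum M :=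
  calc M.d = ∑ i ∈ Finset.range M.d, 1 := by simp
    _ ≤ ∑ i ∈ Finset.range M.d, M.entry i i :=
      Finset.sum_le_sum fun i hi => hD i (Finset.mem_range.1 hi)
    _ ≤ entrySum M :=
      Finset.sum_le_sum fun i hi => Finset.single_le_sum (fun j _ => Nat.zero_le _) hi

end entrySum

section canonSeq

theorem flatMap_replicate_eq_nil {f : ℕ → ℕ} {n : ℕ} (hz : ∀ i < n, f i = 0) :
    (List.range n).reverse.flatMap (fun i => List.replicate (f i) i) = [] := by
  simp +contextual [List.flatMap_eq_nil_iff, hz]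

theorem flatMap_replicate_add_ite {f : ℕ → ℕ} {a n : ℕ} (ha : a < n)
    (hz : ∀ i < a, f i = 0) :
    (List.range n).reverse.flatMap (fun i => List.replicate (f i + if i = a then 1 else 0) i) =
      (List.range n).reverse.flatMap (fun i => List.replicate (f i) i) ++ [a] := by
  induction n with
  | zero => omega
  | succ n ih =>
    simp only [List.range_succ, List.reverse_append, List.reverse_singleton, List.singleton_append,
      List.flatMap_cons]
    rcases (Nat.lt_succ_iff.1 ha).lt_or_eq with ha | rfl
    · rw [ih (by omega), if_neg (by omega), Nat.add_zero, List.append_assoc]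
    · rw [flatMap_replicate_eq_nil hz,
        flatMap_replicate_eq_nil fun i hi => by simp [hz i hi, hi.ne], if_pos rfl, List.replicate_succ', List.append_nil, List.append_nil]

variable {M : FMat} {a : ℕ}

theorem canonSeq_incLastCol (ha : a < M.d) (hz : ∀ i < a, M.entry i (M.d - 1) = 0) :
    canonSeq (M.incLastCol a) = canonSeq M ++ [a] := by
  obtain ⟨D, hD⟩ : ∃ D, M.d = D + 1 := ⟨M.d - 1, by omega⟩
  simp only [canonSeq, FMat.incLastCol, hD, Nat.add_sub_cancel] at hz ⊢
  rw [List.range_succ, List.flatMap_append, List.flatMap_append, List.append_assoc,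
    List.flatMap_singleton, List.flatMap_singleton]
  congr 1
  · refine List.flatMap_congr fun j hj => List.flatMap_congr fun i _ => ?_
    rw [if_neg fun h => (List.mem_range.1 hj).ne h.2, Nat.add_zero]
  · simpa using flatMap_replicate_add_ite (f := fun i => M.entry i D) (by omega) hz

theorem canonSeq_grow : canonSeq M.grow = canonSeq M ++ [M.d] := by
  simp only [canonSeq, FMat.grow]
  rw [List.range_succ, List.flatMap_append, List.flatMap_singleton]
  congr 1
  · refine List.flatMap_congr fun j hj => List.flatMap_congr fun i hi => ?_
    simp only [List.mem_range, List.mem_reverse] at hi hj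
    rw [if_neg (by omega)]
  · have h := flatMap_replicate_add_ite (f := fun _ => 0) (Nat.lt_succ_self M.d) fun _ _ => rfl
    rw [flatMap_replicate_eq_nil fun _ _ => rfl, List.nil_append] at h
    simpa using h

end canonSeq

structure SelfModInvariant (l : List ℕ) (M : FMat) : Prop where
  d_eq : M.d = ascents l + 1
  isUpper : M.IsUpper
  hasPosDiag : M.HasPosDiag
  entry_getLastD_ne_zero : M.entry (l.getLastD 0) (M.d - 1) ≠ 0
  mindex_eq : mindex M = l.getLastD 0
  entrySum_eq : entrySum M = l.length
  canonSeq_eq : canonSeq M = l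

namespace SelfModInvariant

variable {l : List ℕ} {M : FMat} {a : ℕ}

theorem getLastD_lt (h : SelfModInvariant l M) : l.getLastD 0 < M.d :=
  h.isUpper.lt_d_of_entry_ne_zero h.entry_getLastD_ne_zero

theorem ne_nil (h : SelfModInvariant l M) : l ≠ [] := by
  have := d_le_entrySum h.hasPosDiag
  rw [h.entrySum_eq, h.d_eq] at this
  exact List.ne_nil_of_length_pos (by omega)

theorem incLastCol (h : SelfModInvariant l M) (ha : a ≤ l.getLastD 0) :
    SelfModInvariant (l ++ [a]) (M.incLastCol a) := by
  have hlt := h.getLastD_lt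
  have hz : ∀ i < a, M.entry i (M.d - 1) = 0 := fun i hi =>
    entry_eq_zero_of_lt_mindex (h.mindex_eq ▸ hi.trans_le ha)
  have hentry : (M.incLastCol a).entry a (M.d - 1) ≠ 0 := by simp [FMat.incLastCol]
  refine ⟨?_, h.isUpper.incLastCol (by omega), h.hasPosDiag.incLastCol, ?_, ?_, ?_, ?_⟩
  · rw [ascents_concat h.ne_nil, if_neg (by omega), ← h.d_eq]; rfl
  · rwa [List.getLastD_concat]
  · rw [List.getLastD_concat]
    exact mindex_eq_of_ne_zero_of_forall_lt hentry fun i hi => by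
      simp [FMat.incLastCol, hz i hi, hi.ne]
  · rw [entrySum_incLastCol (by omega), h.entrySum_eq, List.length_append, List.length_singleton]
  · rw [canonSeq_incLastCol (by omega) hz, h.canonSeq_eq]

theorem grow (h : SelfModInvariant l M) : SelfModInvariant (l ++ [M.d]) M.grow := by
  have hlt := h.getLastD_lt
  refine ⟨?_, h.isUpper.grow, h.hasPosDiag.grow, ?_, ?_, ?_, ?_⟩
  · rw [ascents_concat h.ne_nil, if_pos hlt, ← h.d_eq]; rfl
  · simp [FMat.grow]
  · rw [List.getLastD_concat]
    exact mindex_eq_of_ne_zero_of_forall_lt (by simp [FMat.grow]) fun i hi => by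
      simp [FMat.grow, hi.ne]
  · rw [entrySum_grow, h.entrySum_eq, List.length_append, List.length_singleton]
  · rw [canonSeq_grow, h.canonSeq_eq]

theorem fStep (h : SelfModInvariant l M) (ha : a ≤ l.getLastD 0 ∨ a = ascents l + 1) :
    SelfModInvariant (l ++ [a]) (fStep M a) := by
  by_cases hle : a ≤ l.getLastD 0
  · rw [fStep_of_le_mindex (h.mindex_eq ▸ hle)]
    exact h.incLastCol hle
  · obtain rfl : a = M.d := by have := h.d_eq; omega
    rw [fStep_d_of_mindex_lt (h.mindex_eq ▸ h.getLastD_lt)]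
    exact h.grow

end SelfModInvariant

theorem selfModInvariant_singleton_zero : SelfModInvariant [0] (fAM [0]) := by
  have h00 : (fAM [0]).entry 0 0 ≠ 0 := by decide
  refine ⟨rfl, fun i j hij => ?_, fun i hi => ?_, h00,
    mindex_eq_of_ne_zero_of_forall_lt h00 fun _ h => absurd h (Nat.not_lt_zero _), by decide,
    by decide⟩
  · exact if_neg (by simp only [show (fAM [0]).d = 1 from rfl] at hij; omega)
  · obtain rfl : i = 0 := by simpa [fAM] using hi
    exact Nat.pos_of_ne_zero h00

theorem selfModInvariant_fAM {l : List ℕ} (h : SelfModified l) (hl : l ≠ []) :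
    SelfModInvariant l (fAM l) := by
  induction l using List.reverseRecOn with
  | nil => exact absurd rfl hl
  | append_singleton l a ih =>
    rcases eq_or_ne l [] with rfl | hl
    · obtain rfl : a = 0 := h.1.1
      exact selfModInvariant_singleton_zero
    · obtain ⟨hsm, ha⟩ := (selfModified_concat_iff hl a).1 h
      rw [fAM_concat hl]
      exact (ih hsm hl).fStep ha

theorem fAM_singleton_zero_eq {M : FMat} (hM : M.IsUpper) (hD : M.HasPosDiag)
    (hs : entrySum M = 1) : fAM [0] = M := by
  have hd : M.d = 1 := by
    have := d_le_entrySum hD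
    have := d_pos_of_entrySum_ne_zero (M := M) (by omega)
    omega
  have h00 : M.entry 0 0 = 1 := by simpa [entrySum, hd] using hs
  refine FMat.ext hd.symm fun i j => ?_
  show (if i = 0 ∧ j = 0 then 1 else 0) = M.entry i j
  split_ifs with hij
  · rw [hij.1, hij.2, h00]
  · exact (hM i j (by omega)).symm

theorem SelfModified.concat_fAM_d {l : List ℕ} (h : SelfModified l) (hl : l ≠ []) :
    SelfModified (l ++ [(fAM l).d]) ∧ fAM (l ++ [(fAM l).d]) = (fAM l).grow := by
  have hI := selfModInvariant_fAM h hl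
  exact ⟨(selfModified_concat_iff hl _).2 ⟨h, Or.inr hI.d_eq⟩,
    by rw [fAM_concat hl, fStep_d_of_mindex_lt (hI.mindex_eq ▸ hI.getLastD_lt)]⟩

theorem SelfModified.concat_of_le_getLastD {l : List ℕ} (h : SelfModified l) (hl : l ≠ []) {a : ℕ}
    (ha : a ≤ l.getLastD 0) :
    SelfModified (l ++ [a]) ∧ fAM (l ++ [a]) = (fAM l).incLastCol a := by
  have hI := selfModInvariant_fAM h hl
  exact ⟨(selfModified_concat_iff hl _).2 ⟨h, Or.inl ha⟩,
    by rw [fAM_concat hl, fStep_of_le_mindex (hI.mindex_eq ▸ ha)]⟩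

theorem exists_selfModified_fAM_eq (n : ℕ) {M : FMat} (hM : M.IsUpper) (hD : M.HasPosDiag)
    (hs : entrySum M = n + 1) : ∃ l, SelfModified l ∧ l.length = n + 1 ∧ fAM l = M := by
  induction n generalizing M with
  | zero => exact ⟨[0], selfModified_singleton_zero, rfl, fAM_singleton_zero_eq hM hD hs⟩
  | succ n ih =>
    have hd := d_pos_of_entrySum_ne_zero (M := M) (by omega)
    have hm := entry_mindex_ne_zero (hD (M.d - 1) (by omega)).ne'
    by_cases hcorner : mindex M = M.d - 1 ∧ M.entry (M.d - 1) (M.d - 1) = 1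
    · have hgrow : M.shrink.grow = M := FMat.grow_shrink hM hd
        (fun i hi => entry_eq_zero_of_lt_mindex (hcorner.1 ▸ hi)) hcorner.2
      have hs' : entrySum M.shrink = n + 1 := by
        have := entrySum_grow (M := M.shrink)
        rw [hgrow] at this
        omega
      obtain ⟨l, hl, hlen, hfam⟩ := ih hM.shrink hD.shrink hs'
      obtain ⟨hl', hfam'⟩ := hl.concat_fAM_d (List.ne_nil_of_length_pos (by omega))
      exact ⟨_, hl', by simp [hlen], by rw [hfam', hfam, hgrow]⟩
    · set m := mindex M
      have hinc : (M.decLastCol m).incLastCol m = M := FMat.incLastCol_decLastCol hm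
      have hs' : entrySum (M.decLastCol m) = n + 1 := by
        have := entrySum_incLastCol (M := M.decLastCol m) (hM.lt_d_of_entry_ne_zero hm)
        rw [hinc] at this
        omega
      obtain ⟨l, hl, hlen, hfam⟩ := ih hM.decLastCol
        (hD.decLastCol fun h h1 => hcorner ⟨h, h ▸ h1⟩) hs'
      have hne : l ≠ [] := List.ne_nil_of_length_pos (by omega)
      have hle : m ≤ l.getLastD 0 := by
        have := (selfModInvariant_fAM hl hne).entry_getLastD_ne_zero
        rw [hfam] at this
        exact mindex_le fun h0 => this (by simp only [FMat.decLastCol, h0, Nat.zero_sub])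
      obtain ⟨hl', hfam'⟩ := hl.concat_of_le_getLastD hne hle
      exact ⟨_, hl', by simp [hlen], by rw [hfam', hfam, hinc]⟩

theorem fAM_bijOn_selfModified (n : ℕ) (hn : 0 < n) :
    Set.BijOn fAM {l : List ℕ | SelfModified l ∧ l.length = n}
      {M : FMat | IsFishburn M ∧ entrySum M = n ∧ ∀ i, i < M.d → 0 < M.entry i i} := by
  have hne : ∀ l : List ℕ, l.length = n → l ≠ [] := fun l hl =>
    List.ne_nil_of_length_pos (hl ▸ hn)
  refine ⟨fun l ⟨hl, hlen⟩ => ?_,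
    fun l₁ ⟨hl₁, hlen₁⟩ l₂ ⟨hl₂, hlen₂⟩ heq => ?_, fun M ⟨hF, hs, hD⟩ => ?_⟩
  · have hI := selfModInvariant_fAM hl (hne l hlen)
    exact ⟨hI.isUpper.isFishburn hI.hasPosDiag, hI.entrySum_eq.trans hlen, hI.hasPosDiag⟩
  · rw [← (selfModInvariant_fAM hl₁ (hne l₁ hlen₁)).canonSeq_eq,
      ← (selfModInvariant_fAM hl₂ (hne l₂ hlen₂)).canonSeq_eq, heq]
  · obtain ⟨k, rfl⟩ : ∃ k, n = k + 1 := ⟨n - 1, by omega⟩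
    obtain ⟨l, hl, hlen, hfam⟩ := exists_selfModified_fAM_eq k hF.1 hD hs
    exact ⟨l, ⟨hl, hlen⟩, hfam⟩
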